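/- arXiv:2111.11788 — 2 statements merged into one kernel-verified Lean document; each statement's English description precedes it below -/
import Mathlib

section
/- For any schedule produced by greedy list scheduling, the completion time satisfies W ≤ (1/p)·Σ_{i=1}^n w_i + max_i w_i. -/
open Finset

/-!
Consider the last task `i` placed on a processor `j`. The load of `j` is the load `j` carried
when `i` arrived, plus `w i`. Greedy chose `j` because it was the least loaded processor at that
moment, and the least load is at most the average. So the load before `i` is at most
`(∑ k < i, w k) / p ≤ (∑ k, w k) / p`, and `w i` is at most the largest weight.
-/

/-- Final load of processor `j` under assignment `assign`. -/
def loadOf {n p : ℕ} (w : Fin n → ℝ) (assign : Fin n → Fin p) (j : Fin p) : ℝ :=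
  ∑ i ∈ Finset.univ.filter (fun i => assign i = j), w i

/-- Makespan of an assignment: the maximum processor load. -/
def makespan {n p : ℕ} (hp : 0 < p) (w : Fin n → ℝ) (assign : Fin n → Fin p) : ℝ :=
  Finset.univ.sup' ⟨⟨0, hp⟩, Finset.mem_univ _⟩ (loadOf w assign)

/-- Load of processor `j` coming from the tasks preceding task `i` in the list order. -/
def loadBefore {n p : ℕ} (w : Fin n → ℝ) (assign : Fin n → Fin p) (i : Fin n) (j : Fin p) : ℝ :=
  ∑ k ∈ Finset.univ.filter (fun k => k < i ∧ assign k = j), w k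

section

variable {n p : ℕ} (w : Fin n → ℝ) (assign : Fin n → Fin p)

theorem sum_loadBefore (i : Fin n) :
    ∑ j, loadBefore w assign i j = ∑ k ∈ univ.filter (· < i), w k := by
  rw [← sum_fiberwise (univ.filter (· < i)) assign w]
  simp only [loadBefore, filter_filter]

theorem loadOf_eq_loadBefore_add {i : Fin n} (hlast : ∀ k, assign k = assign i → k ≤ i) :
    loadOf w assign (assign i) = loadBefore w assign i (assign i) + w i := by
  have hi : i ∈ univ.filter fun k => assign k = assign i := mem_filter.2 ⟨mem_univ i, rfl⟩
  rw [loadOf, ← add_sum_erase _ w hi, add_comm, loadBefore]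
  refine congrArg (· + w i) (sum_congr ?_ fun _ _ => rfl)
  ext k
  simp only [mem_erase, mem_filter, mem_univ, true_and]
  exact ⟨fun ⟨hne, hk⟩ => ⟨lt_of_le_of_ne (hlast k hk) hne, hk⟩, fun ⟨hlt, hk⟩ => ⟨hlt.ne, hk⟩⟩

variable {w assign}

theorem loadBefore_le_average (hw : ∀ k, 0 ≤ w k) {i : Fin n}
    (hmin : ∀ j, loadBefore w assign i (assign i) ≤ loadBefore w assign i j) :
    loadBefore w assign i (assign i) ≤ (∑ k, w k) / p := by
  have hp : (0 : ℝ) < p := by exact_mod_cast (assign i).pos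
  rw [le_div_iff₀' hp]
  calc (p : ℝ) * loadBefore w assign i (assign i)
      = ∑ _j : Fin p, loadBefore w assign i (assign i) := by simp
    _ ≤ ∑ j, loadBefore w assign i j := sum_le_sum fun j _ => hmin j
    _ = ∑ k ∈ univ.filter (· < i), w k := sum_loadBefore w assign i
    _ ≤ ∑ k, w k := sum_le_sum_of_subset_of_nonneg (filter_subset _ _) fun k _ _ => hw k

end

/-- for a greedy list schedule, the makespan satisfies
`W ≤ (1/p)·Σ w_i + max_i w_i`. -/
theorem greedy_makespan_bound {n p : ℕ} (hn : 0 < n) (hp : 0 < p)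
    (w : Fin n → ℝ) (hw : ∀ i, 0 ≤ w i)
    (assign : Fin n → Fin p)
    (hgreedy : ∀ i j, loadBefore w assign i (assign i) ≤ loadBefore w assign i j) :
    makespan hp w assign
      ≤ (∑ i, w i) / p + Finset.univ.sup' ⟨⟨0, hn⟩, Finset.mem_univ _⟩ w := by
  refine sup'_le _ _ fun j _ => ?_
  rcases (univ.filter fun i => assign i = j).eq_empty_or_nonempty with hidle | hbusy
  · rw [loadOf, hidle, sum_empty]
    exact add_nonneg (div_nonneg (sum_nonneg fun i _ => hw i) p.cast_nonneg)
      ((hw ⟨0, hn⟩).trans (le_sup' w (mem_univ _)))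
  · obtain ⟨i, hi, hlast⟩ := exists_max_image _ id hbusy
    obtain rfl := (mem_filter.1 hi).2
    rw [loadOf_eq_loadBefore_add w assign (i := i) fun k hk => hlast k (mem_filter.2 ⟨mem_univ k, hk⟩)]
    exact add_le_add (loadBefore_le_average hw (hgreedy i)) (le_sup' w (mem_univ i))
end

section
/- No-idling lemma for nested-group scheduling: under q_0 | q_1 | ... | q_M | p, in the incremental greedy schedule, at any time before all tasks have been assigned, every processor is executing some task; equivalently, if the last-finishing task starts at time w_s, then every processor has total load at least w_s, so w_s ≤ W_T/p. -/
/-!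
Before a task of size `q` is assigned, the loads are constant on every block of `q` processors:
each earlier task had a size `q'` with `q ∣ q'`, so the `q'`-block it raised to a common value is a
union of `q`-blocks. The start time of a `q`-block is therefore the common load of its processors, and
as `q ∣ p` every processor lies in some `q`-block, so the least-loaded block starts no later than any
processor becomes free. Loads only grow, hence every start time is at most every final load, and
summing over the `p` processors bounds it by `W_T / p`.
-/

open Finset

/-- The `k`-th contiguous block of `q` processors among `Fin p`. -/
def block (p q k : ℕ) : Finset (Fin p) :=
  Finset.univ.filter (fun i => k * q ≤ (i : ℕ) ∧ (i : ℕ) < (k + 1) * q)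

/-- The current completion time (maximal load) of the `k`-th block of `q`
processors; a task assigned to this block starts at this time. -/
noncomputable def blockMax {p : ℕ} (load : Fin p → ℝ) (q k : ℕ) : ℝ :=
  if h : (block p q k).Nonempty then (block p q k).sup' h load else 0

/-- `GreedyRun p tasks load final starts`: starting from per-processor loads
`load`, the incremental greedy algorithm processes the list `tasks` (each task
is a pair `(q, w)` of processor requirement and execution time) in order,
assigning each task to a least-loaded group of `q` processors; `final` are the
resulting loads and `starts` records the start time of each task. -/
inductive GreedyRun (p : ℕ) :
    List (ℕ × ℝ) → (Fin p → ℝ) → (Fin p → ℝ) → List ℝ → Prop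
  | nil (load : Fin p → ℝ) : GreedyRun p [] load load []
  | cons (q : ℕ) (w : ℝ) (k : ℕ) (rest : List (ℕ × ℝ))
      (load final : Fin p → ℝ) (starts : List ℝ)
      (hk : k < p / q)
      (hmin : ∀ k' < p / q, blockMax load q k ≤ blockMax load q k')
      (hrun : GreedyRun p rest
        (fun i => if i ∈ block p q k then blockMax load q k + w else load i)
        final starts) :
      GreedyRun p ((q, w) :: rest) load final (blockMax load q k :: starts)

section Blocks

variable {p : ℕ}

lemma mem_block_iff {q : ℕ} (hq : 0 < q) {i : Fin p} {k : ℕ} :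
    i ∈ block p q k ↔ (i : ℕ) / q = k := by
  rw [Nat.div_eq_iff hq]
  simp only [block, mem_filter, mem_univ, true_and, add_one_mul]
  omega

lemma card_block {q k : ℕ} (hk : k < p / q) : #(block p q k) = q := by
  have hle : (k + 1) * q ≤ p := (Nat.mul_le_mul_right q hk).trans (Nat.div_mul_le_self p q)
  have hmap : (block p q k).map Fin.valEmbedding = Ico (k * q) ((k + 1) * q) := by
    ext n
    simp only [block, mem_map, mem_filter, mem_univ, true_and, Fin.valEmbedding_apply, mem_Ico]
    constructor
    · rintro ⟨i, hi, rfl⟩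
      exact hi
    · intro hn
      exact ⟨⟨n, by omega⟩, hn, rfl⟩
  rw [← card_map Fin.valEmbedding, hmap, Nat.card_Ico, add_one_mul, Nat.add_sub_cancel_left]

lemma le_blockMax (load : Fin p → ℝ) {q k : ℕ} {i : Fin p} (hi : i ∈ block p q k) :
    load i ≤ blockMax load q k := by
  rw [blockMax, dif_pos ⟨i, hi⟩]
  exact le_sup' load hi

def IsBlockConstant (load : Fin p → ℝ) (q : ℕ) : Prop :=
  ∀ i j : Fin p, (i : ℕ) / q = (j : ℕ) / q → load i = load j

noncomputable def assignTask (load : Fin p → ℝ) (q k : ℕ) (w : ℝ) : Fin p → ℝ :=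
  fun i => if i ∈ block p q k then blockMax load q k + w else load i

lemma le_assignTask (load : Fin p → ℝ) (q k : ℕ) {w : ℝ} (hw : 0 ≤ w) (i : Fin p) :
    load i ≤ assignTask load q k w i := by
  unfold assignTask
  split_ifs with hi
  · linarith [le_blockMax load hi]
  · exact le_rfl

namespace IsBlockConstant

variable {load : Fin p → ℝ} {q : ℕ}

lemma of_dvd (h : IsBlockConstant load q) {r : ℕ} (hrq : r ∣ q) : IsBlockConstant load r := by
  obtain ⟨m, rfl⟩ := hrq
  intro i j hij
  apply h
  rw [← Nat.div_div_eq_div_mul, ← Nat.div_div_eq_div_mul, hij]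

lemma blockMax_eq (h : IsBlockConstant load q) (hq : 0 < q) {k : ℕ} {i : Fin p}
    (hi : i ∈ block p q k) : blockMax load q k = load i := by
  refine le_antisymm ?_ (le_blockMax load hi)
  rw [blockMax, dif_pos ⟨i, hi⟩]
  refine sup'_le _ _ fun j hj => (h j i ?_).le
  rw [(mem_block_iff hq).1 hi, (mem_block_iff hq).1 hj]

lemma assignTask (h : IsBlockConstant load q) (hq : 0 < q) (k : ℕ) (w : ℝ) :
    IsBlockConstant (assignTask load q k w) q := by
  intro i j hij
  simp only [_root_.assignTask, mem_block_iff hq, hij, h i j hij]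

lemma sum_assignTask (h : IsBlockConstant load q) (hq : 0 < q) {k : ℕ} (hk : k < p / q)
    (w : ℝ) : ∑ i, _root_.assignTask load q k w i = ∑ i, load i + q * w := by
  have hsplit : ∀ i, _root_.assignTask load q k w i
      = load i + if i ∈ block p q k then w else 0 := by
    intro i
    unfold _root_.assignTask
    split_ifs with hi
    · rw [h.blockMax_eq hq hi]
    · rw [add_zero]
  simp only [hsplit, sum_add_distrib, sum_ite_mem, univ_inter, sum_const, card_block hk,
    nsmul_eq_mul]

lemma blockMax_le_of_minimal (h : IsBlockConstant load q) (hq : 0 < q) (hqp : q ∣ p) {k : ℕ}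
    (hmin : ∀ k' < p / q, blockMax load q k ≤ blockMax load q k') (j : Fin p) :
    blockMax load q k ≤ load j :=
  (hmin _ (Nat.div_lt_div_of_lt_of_dvd hqp j.2)).trans_eq
    (h.blockMax_eq hq ((mem_block_iff hq).2 rfl))

end IsBlockConstant

lemma forall_isBlockConstant_assignTask {load : Fin p → ℝ} {q : ℕ} {w : ℝ}
    {rest : List (ℕ × ℝ)} (hq : 0 < q)
    (hnest : ((q, w) :: rest).Pairwise fun a b => b.1 ∣ a.1)
    (hconst : ∀ t ∈ (q, w) :: rest, IsBlockConstant load t.1) (k : ℕ) :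
    ∀ t ∈ rest, IsBlockConstant (assignTask load q k w) t.1 := fun _ ht =>
  ((hconst _ List.mem_cons_self).assignTask hq k w).of_dvd (List.rel_of_pairwise_cons hnest ht)

end Blocks

namespace GreedyRun

variable {p : ℕ} {tasks : List (ℕ × ℝ)} {load final : Fin p → ℝ} {starts : List ℝ}

lemma pos_of_mem_starts (h : GreedyRun p tasks load final starts) {s : ℝ} (hs : s ∈ starts) :
    0 < p := by
  cases h with
  | nil => simp at hs
  | cons q w k _ _ _ _ hk =>
    obtain ⟨hq, hqp⟩ := Nat.div_pos_iff.1 (Nat.zero_lt_of_lt hk)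
    exact hq.trans_le hqp

lemma pos_of_mem (h : GreedyRun p tasks load final starts) : ∀ t ∈ tasks, 0 < t.1 := by
  induction h with
  | nil => simp
  | cons q w k rest load final starts hk _ _ ih =>
    simp only [List.mem_cons, forall_eq_or_imp]
    exact ⟨(Nat.div_pos_iff.1 (Nat.zero_lt_of_lt hk)).1, ih⟩

lemma le_final (h : GreedyRun p tasks load final starts) (hw : ∀ t ∈ tasks, 0 ≤ t.2)
    (j : Fin p) : load j ≤ final j := by
  induction h with
  | nil => exact le_rfl
  | cons q w k rest load final starts _ _ _ ih =>
    exact (le_assignTask load q k (hw _ List.mem_cons_self) j).trans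
      (ih fun t ht => hw t (List.mem_cons_of_mem _ ht))

lemma sum_final (h : GreedyRun p tasks load final starts)
    (hnest : tasks.Pairwise fun a b => b.1 ∣ a.1)
    (hconst : ∀ t ∈ tasks, IsBlockConstant load t.1) :
    ∑ j, final j = ∑ j, load j + (tasks.map fun t => (t.1 : ℝ) * t.2).sum := by
  induction h with
  | nil => simp
  | cons q w k rest load final starts hk _ _ ih =>
    have hq : 0 < q := (Nat.div_pos_iff.1 (Nat.zero_lt_of_lt hk)).1
    have hrest : ∑ j, final j
        = ∑ j, assignTask load q k w j + (rest.map fun t => (t.1 : ℝ) * t.2).sum :=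
      ih hnest.of_cons (forall_isBlockConstant_assignTask hq hnest hconst k)
    rw [hrest, (hconst _ List.mem_cons_self).sum_assignTask hq hk, List.map_cons, List.sum_cons]
    ring

lemma start_le_final (h : GreedyRun p tasks load final starts) (hdvd : ∀ t ∈ tasks, t.1 ∣ p)
    (hw : ∀ t ∈ tasks, 0 ≤ t.2) (hnest : tasks.Pairwise fun a b => b.1 ∣ a.1)
    (hconst : ∀ t ∈ tasks, IsBlockConstant load t.1) :
    ∀ s ∈ starts, ∀ j, s ≤ final j := by
  induction h with
  | nil => simp
  | cons q w k rest load final starts hk hmin hrun ih =>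
    have hq : 0 < q := (Nat.div_pos_iff.1 (Nat.zero_lt_of_lt hk)).1
    have hw_rest : ∀ t ∈ rest, 0 ≤ t.2 := fun t ht => hw t (List.mem_cons_of_mem _ ht)
    simp only [List.mem_cons, forall_eq_or_imp]
    refine ⟨fun j => ?_, ih (fun t ht => hdvd t (List.mem_cons_of_mem _ ht)) hw_rest
      hnest.of_cons (forall_isBlockConstant_assignTask hq hnest hconst k)⟩
    calc blockMax load q k
        ≤ load j := (hconst _ List.mem_cons_self).blockMax_le_of_minimal hq
          (hdvd _ List.mem_cons_self) hmin j
      _ ≤ assignTask load q k w j := le_assignTask load q k (hw _ List.mem_cons_self) j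
      _ ≤ final j := hrun.le_final hw_rest j

end GreedyRun

section DivisibilityChain

variable {M : ℕ} {qs : ℕ → ℕ}

lemma dvd_of_le_of_forall_dvd_succ (hchain : ∀ ℓ < M, qs ℓ ∣ qs (ℓ + 1)) {a b : ℕ}
    (hab : a ≤ b) (hb : b ≤ M) : qs a ∣ qs b := by
  induction b, hab using Nat.le_induction with
  | base => exact dvd_rfl
  | succ n _ ih => exact (ih (by omega)).trans (hchain n (by omega))

lemma dvd_of_value_le_of_forall_dvd_succ (hchain : ∀ ℓ < M, qs ℓ ∣ qs (ℓ + 1)) {a b : ℕ}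
    (ha : a ≤ M) (hb : b ≤ M) (hle : qs b ≤ qs a) (hpos : 0 < qs b) : qs b ∣ qs a := by
  rcases le_total b a with h | h
  · exact dvd_of_le_of_forall_dvd_succ hchain h ha
  · have hdvd := dvd_of_le_of_forall_dvd_succ hchain h hb
    rw [le_antisymm hle (Nat.le_of_dvd hpos hdvd)]

end DivisibilityChain

theorem incremental_greedy_no_idling_general {p M : ℕ}
    (qs : ℕ → ℕ)
    (hchain : ∀ ℓ < M, qs ℓ ∣ qs (ℓ + 1)) (hqp : qs M ∣ p)
    (tasks : List (ℕ × ℝ))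
    (hreq : ∀ t ∈ tasks, ∃ ℓ ≤ M, t.1 = qs ℓ)
    (hpos : ∀ t ∈ tasks, 0 < t.2)
    (hsorted : tasks.Pairwise (fun a b => b.1 ≤ a.1))
    (final : Fin p → ℝ) (starts : List ℝ)
    (hrun : GreedyRun p tasks (fun _ => 0) final starts) :
    ∀ s ∈ starts,
      (∀ j : Fin p, s ≤ final j) ∧
      s ≤ (tasks.map (fun t => (t.1 : ℝ) * t.2)).sum / p := by
  have hdvd : ∀ t ∈ tasks, t.1 ∣ p := fun t ht => by
    obtain ⟨ℓ, hℓ, hqt⟩ := hreq t ht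
    exact hqt ▸ (dvd_of_le_of_forall_dvd_succ hchain hℓ le_rfl).trans hqp
  have hnest : tasks.Pairwise fun a b => b.1 ∣ a.1 := hsorted.imp_of_mem fun ha hb hle => by
    obtain ⟨ℓa, hℓa, hqa⟩ := hreq _ ha
    obtain ⟨ℓb, hℓb, hqb⟩ := hreq _ hb
    rw [hqa, hqb] at hle ⊢
    exact dvd_of_value_le_of_forall_dvd_succ hchain hℓa hℓb hle (hqb ▸ hrun.pos_of_mem _ hb)
  have hconst : ∀ t ∈ tasks, IsBlockConstant (fun _ : Fin p => (0 : ℝ)) t.1 :=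
    fun _ _ _ _ _ => rfl
  intro s hs
  have hidle := hrun.start_le_final hdvd (fun t ht => (hpos t ht).le) hnest hconst s hs
  refine ⟨hidle, ?_⟩
  have hp : (0 : ℝ) < p := Nat.cast_pos.2 (hrun.pos_of_mem_starts hs)
  have hsum := card_nsmul_le_sum univ final s fun j _ => hidle j
  rw [hrun.sum_final hnest hconst] at hsum
  rw [le_div_iff₀ hp]
  simpa [mul_comm] using hsum

/-- no-idling lemma for nested-group scheduling. Under the
divisibility chain `q_0 ∣ q_1 ∣ … ∣ q_M ∣ p`, in the incremental greedy
schedule (tasks in order of decreasing processor requirement, each assigned to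
a least-loaded group) no processor idles while tasks remain: the start time of
every task — in particular of the last-finishing one — is at most the final
total load of every processor, and hence at most `W_T / p` where
`W_T = Σ q·w` is the total work. -/
theorem incremental_greedy_no_idling {p M : ℕ} (hp : 0 < p)
    (qs : ℕ → ℕ) (hq : ∀ ℓ ≤ M, 0 < qs ℓ)
    (hchain : ∀ ℓ < M, qs ℓ ∣ qs (ℓ + 1)) (hqp : qs M ∣ p)
    (tasks : List (ℕ × ℝ))
    (hreq : ∀ t ∈ tasks, ∃ ℓ ≤ M, t.1 = qs ℓ)
    (hpos : ∀ t ∈ tasks, 0 < t.2)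
    (hsorted : tasks.Pairwise (fun a b => b.1 ≤ a.1))
    (final : Fin p → ℝ) (starts : List ℝ)
    (hrun : GreedyRun p tasks (fun _ => 0) final starts) :
    ∀ s ∈ starts,
      (∀ j : Fin p, s ≤ final j) ∧
      s ≤ (tasks.map (fun t => (t.1 : ℝ) * t.2)).sum / p :=
  incremental_greedy_no_idling_general qs hchain hqp tasks hreq hpos hsorted final starts hrun
end
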